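/- For every k ≥ 1 and every μ ⊆ {1, …, 2k}, the set {η ⊆ {1, …, 2k} : ρₖ(e_η) ≡ ρₖ(e_μ) entrywise mod 2ℤ[i]} has exactly 2^{k−1} elements; that is, each equivalence class of generators acting identically on the 2-torsion points contains exactly 2^{k−1} of the 2^{2k} generators. -/

import Mathlib

open Matrix

namespace DiracSpinor

/-- The Gaussian integer `i`. -/
def gi : GaussianInt := ⟨0, 1⟩

/-- `E₁ = [[i,0],[0,−i]]`. -/
def E1 : Matrix (Fin 2) (Fin 2) GaussianInt := !![gi, 0; 0, -gi]

/-- `E₂ = [[0,i],[i,0]]`. -/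
def E2 : Matrix (Fin 2) (Fin 2) GaussianInt := !![0, gi; gi, 0]

/-- `B = [[0,−i],[i,0]]`. -/
def Bm : Matrix (Fin 2) (Fin 2) GaussianInt := !![0, -gi; gi, 0]

/-- The 2×2 identity matrix. -/
def I2 : Matrix (Fin 2) (Fin 2) GaussianInt := 1

/-- Kronecker product of square matrices, with the standard identification of the
index set `Fin m × Fin n` with `Fin (m*n)`. -/
def kron {m n : ℕ} (A : Matrix (Fin m) (Fin m) GaussianInt)
    (B : Matrix (Fin n) (Fin n) GaussianInt) :
    Matrix (Fin (m * n)) (Fin (m * n)) GaussianInt :=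
  Matrix.reindex finProdFinEquiv finProdFinEquiv (Matrix.kroneckerMap (· * ·) A B)

/-- Iterated Kronecker power `A^{⊗t}`. -/
def kronPow (A : Matrix (Fin 2) (Fin 2) GaussianInt) :
    (t : ℕ) → Matrix (Fin (2 ^ t)) (Fin (2 ^ t)) GaussianInt
  | 0 => 1
  | t + 1 => Matrix.reindex (finCongr (pow_succ 2 t).symm) (finCongr (pow_succ 2 t).symm)
      (kron (kronPow A t) A)

theorem sizeEq (k : ℕ) (i : Fin (2 * k)) :
    2 ^ (k - 1 - i.val / 2) * 2 * 2 ^ (i.val / 2) = 2 ^ k := by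
  have h1 : i.val < 2 * k := i.isLt
  have h2 : (k - 1 - i.val / 2) + 1 + i.val / 2 = k := by omega
  calc 2 ^ (k - 1 - i.val / 2) * 2 * 2 ^ (i.val / 2)
      = 2 ^ ((k - 1 - i.val / 2) + 1 + i.val / 2) := by rw [pow_add, pow_add, pow_one]
    _ = 2 ^ k := by rw [h2]

/-- `rhoVec k i` is `ρₖ(e_{i+1})`, the matrix representing the `(i+1)`-st vector generator
(`i : Fin (2*k)` is 0-based, so `i = 2j-2` encodes `e_{2j-1}` and `i = 2j-1` encodes `e_{2j}`):
`ρₖ(e_{2j−1}) = I₂^{⊗(k−j)} ⊗ E₁ ⊗ B^{⊗(j−1)}` and `ρₖ(e_{2j}) = I₂^{⊗(k−j)} ⊗ E₂ ⊗ B^{⊗(j−1)}`. -/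
def rhoVec (k : ℕ) (i : Fin (2 * k)) : Matrix (Fin (2 ^ k)) (Fin (2 ^ k)) GaussianInt :=
  Matrix.reindex (finCongr (sizeEq k i)) (finCongr (sizeEq k i))
    (kron (kron (kronPow I2 (k - 1 - i.val / 2)) (if i.val % 2 = 0 then E1 else E2))
      (kronPow Bm (i.val / 2)))

/-- `rho k μ` is `ρₖ(e_μ)`: the product of the `ρₖ(e_i)` for `i ∈ μ` taken in increasing order
(`μ : Finset (Fin (2*k))` is the 0-based version of a subset of `{1, …, 2k}`). -/
def rho (k : ℕ) (μ : Finset (Fin (2 * k))) : Matrix (Fin (2 ^ k)) (Fin (2 ^ k)) GaussianInt :=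
  ((μ.sort (· ≤ ·)).map (rhoVec k)).prod

/-- The quotient ring `ℤ[i]/2ℤ[i]`. -/
abbrev Rbar : Type := GaussianInt ⧸ Ideal.span ({2} : Set GaussianInt)

/-- Reduction `ℤ[i] → ℤ[i]/2ℤ[i]`. -/
def red : GaussianInt →+* Rbar := Ideal.Quotient.mk _

/-- `rhoBar k μ` is the entrywise reduction of `ρₖ(e_μ)` mod `2ℤ[i]`. -/
def rhoBar (k : ℕ) (μ : Finset (Fin (2 * k))) : Matrix (Fin (2 ^ k)) (Fin (2 ^ k)) Rbar :=
  (rho k μ).map red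

/-- The shape of a matrix: the 0–1 matrix recording the positions of nonzero entries. -/
def Sh {n : ℕ} (M : Matrix (Fin n) (Fin n) GaussianInt) : Matrix (Fin n) (Fin n) GaussianInt :=
  Matrix.of fun r s => if M r s = 0 then 0 else 1

/-- A matrix has real type if all its nonzero entries lie in `{1, −1}`. -/
def RealType {n : ℕ} (M : Matrix (Fin n) (Fin n) GaussianInt) : Prop :=
  ∀ r s, M r s ≠ 0 → M r s = 1 ∨ M r s = -1

/-- A matrix has imaginary type if all its nonzero entries lie in `{i, −i}`. -/
def ImagType {n : ℕ} (M : Matrix (Fin n) (Fin n) GaussianInt) : Prop :=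
  ∀ r s, M r s ≠ 0 → M r s = gi ∨ M r s = -gi


-- ===== auxiliary development =====

theorem xor_div_pow (x y t : ℕ) : (x ^^^ y) / 2^t = x / 2^t ^^^ y / 2^t := by
  induction t generalizing x y with
  | zero => simp
  | succ t ih => rw [pow_succ, ← Nat.div_div_eq_div_mul, ih, Nat.xor_div_two,
      Nat.div_div_eq_div_mul, Nat.div_div_eq_div_mul, ← pow_succ]

theorem xor_mod_pow (x y t : ℕ) : (x ^^^ y) % 2^t = x % 2^t ^^^ y % 2^t := by
  apply Nat.eq_of_testBit_eq
  intro i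
  simp only [Nat.testBit_mod_two_pow, Nat.testBit_xor]
  by_cases h : i < t <;> simp [h]

theorem kron_apply {m n : ℕ} (A : Matrix (Fin m) (Fin m) GaussianInt)
    (B : Matrix (Fin n) (Fin n) GaussianInt) (r s : Fin (m * n)) :
    kron A B r s = A r.divNat s.divNat * B r.modNat s.modNat := rfl

theorem kron_one_one {m n : ℕ} : kron (1 : Matrix (Fin m) (Fin m) GaussianInt)
    (1 : Matrix (Fin n) (Fin n) GaussianInt) = 1 := by
  rw [kron, Matrix.one_kronecker_one]
  rw [Matrix.reindex_apply]
  exact Matrix.submatrix_one_equiv _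

theorem kronPow_I2 (t : ℕ) : kronPow I2 t = 1 := by
  induction t with
  | zero => rfl
  | succ t ih =>
    rw [kronPow, ih, show I2 = 1 from rfl, kron_one_one, Matrix.reindex_apply]
    exact Matrix.submatrix_one_equiv _
theorem red_eq_iff {a b : GaussianInt} : red a = red b ↔ (2 : GaussianInt) ∣ (a - b) := by
  rw [red, Ideal.Quotient.mk_eq_mk_iff_sub_mem, Ideal.mem_span_singleton]

theorem two_dvd_iff (a : GaussianInt) : (2 : GaussianInt) ∣ a ↔ 2 ∣ a.re ∧ 2 ∣ a.im := by
  have : ((2:ℤ) : GaussianInt) = (2 : GaussianInt) := by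
    simp
  rw [← this, Zsqrtd.intCast_dvd]

theorem red_neg_gi : red (-gi) = red gi := by
  rw [red_eq_iff, two_dvd_iff]
  constructor <;> decide

theorem red_gi_sq : red gi * red gi = 1 := by
  have : red gi * red gi = red (gi * gi) := (map_mul red gi gi).symm
  rw [this, show (1 : Rbar) = red 1 from rfl, red_eq_iff, two_dvd_iff]
  constructor <;> decide

theorem red_gi_ne_zero : red gi ≠ 0 := by
  intro h
  rw [show (0 : Rbar) = red 0 from rfl, red_eq_iff, two_dvd_iff] at h
  exact absurd h (by decide)

theorem red_gi_ne_one : red gi ≠ 1 := by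
  intro h
  rw [show (1 : Rbar) = red 1 from rfl, red_eq_iff, two_dvd_iff] at h
  exact absurd h (by decide)

theorem red_gi_pow (c : ℕ) : red gi ^ c = if c % 2 = 0 then 1 else red gi := by
  induction c with
  | zero => simp
  | succ c ih =>
    rw [pow_succ, ih]
    rcases Nat.even_or_odd c with h | h
    · have : c % 2 = 0 := Nat.even_iff.mp h
      simp [this, Nat.succ_mod_two_eq_one_iff.mpr this]
    · have h1 : c % 2 = 1 := Nat.odd_iff.mp h
      simp [h1, Nat.succ_mod_two_eq_zero_iff.mpr h1, red_gi_sq]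

theorem red_gi_pow_inj {c c' : ℕ} (h : red gi ^ c = red gi ^ c') : c % 2 = c' % 2 := by
  rw [red_gi_pow, red_gi_pow] at h
  by_cases h1 : c % 2 = 0 <;> by_cases h2 : c' % 2 = 0
  · omega
  · rw [if_pos h1, if_neg h2] at h; exact absurd h.symm red_gi_ne_one
  · rw [if_neg h1, if_pos h2] at h; exact absurd h red_gi_ne_one
  · omega

theorem red_Bm (x y : Fin 2) : red (Bm x y) = if x.val ^^^ y.val = 1 then red gi else 0 := by
  fin_cases x <;> fin_cases y <;> simp [Bm, red_neg_gi]

theorem red_E1 (x y : Fin 2) : red (E1 x y) = if x.val ^^^ y.val = 0 then red gi else 0 := by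
  fin_cases x <;> fin_cases y <;> simp [E1, red_neg_gi]

theorem red_E2 (x y : Fin 2) : red (E2 x y) = if x.val ^^^ y.val = 1 then red gi else 0 := by
  fin_cases x <;> fin_cases y <;> simp [E2, red_neg_gi]

theorem red_kronPow_Bm (b : ℕ) (r s : Fin (2^b)) :
    red (kronPow Bm b r s) = if r.val ^^^ s.val = 2^b - 1 then red gi ^ b else 0 := by
  induction b with
  | zero =>
    have hr : r = ⟨0, by norm_num⟩ := by ext; omega
    have hs : s = ⟨0, by norm_num⟩ := by ext; omega
    subst hr hs
    simp [kronPow, Matrix.one_apply]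
  | succ b ih =>
    rw [kronPow, Matrix.reindex_apply, Matrix.submatrix_apply, kron_apply, _root_.map_mul,
      ih, red_Bm]
    simp only [finCongr_symm, finCongr_apply, Fin.coe_divNat, Fin.coe_modNat, Fin.coe_cast]
    have hA : (r.val ^^^ s.val) / 2 = r.val/2 ^^^ s.val/2 := Nat.xor_div_two
    have hE : (r.val ^^^ s.val) % 2 = r.val%2 ^^^ s.val%2 := by
      simpa using xor_mod_pow r.val s.val 1
    have hlt : r.val%2 ^^^ s.val%2 < 2 := by
      have : r.val % 2 < 2^1 := by omega
      have h2 : s.val % 2 < 2^1 := by omega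
      simpa using Nat.xor_lt_two_pow this h2
    have hp : 0 < 2^b := Nat.pow_pos (by norm_num)
    have h2 : 2^(b+1) = 2*2^b := by ring
    by_cases hc : r.val ^^^ s.val = 2^(b+1) - 1
    · have h3 : r.val/2 ^^^ s.val/2 = 2^b - 1 := by omega
      have h4 : r.val%2 ^^^ s.val%2 = 1 := by omega
      rw [if_pos hc, if_pos h3, if_pos h4, pow_succ]
    · rw [if_neg hc]
      by_cases h3 : r.val/2 ^^^ s.val/2 = 2^b-1
      · have h4 : ¬(r.val%2 ^^^ s.val%2 = 1) := by omega
        rw [if_neg h4, mul_zero]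
      · rw [if_neg h3, zero_mul]

/-- The "normal form" matrix mod 2. -/
def Nm (k : ℕ) (c m : ℕ) : Matrix (Fin (2^k)) (Fin (2^k)) Rbar :=
  Matrix.of fun r s => if r.val ^^^ s.val = m then red gi ^ c else 0

theorem Nm_apply (k c m : ℕ) (r s : Fin (2^k)) :
    Nm k c m r s = if r.val ^^^ s.val = m then red gi ^ c else 0 := rfl

def mfun {n : ℕ} (i : Fin n) : ℕ := 2^((i.val+1)/2) - 1

theorem nat_split (Y m' P : ℕ) (_hP : 0 < P) (h1 : Y / P = m' / P) (h2 : Y % P = m' % P) :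
    Y = m' := by
  rw [← Nat.div_add_mod Y P, ← Nat.div_add_mod m' P, h1, h2]

theorem red_E (j : ℕ) (x y : Fin 2) :
    red ((if j % 2 = 0 then E1 else E2) x y) = if x.val ^^^ y.val = j % 2 then red gi else 0 := by
  by_cases h : j % 2 = 0
  · rw [if_pos h, red_E1, h]
  · have h1 : j % 2 = 1 := by omega
    rw [if_neg h, red_E2, h1]

theorem rhoVec_red (k : ℕ) (i : Fin (2*k)) :
    (rhoVec k i).map red = Nm k (i.val/2 + 1) (mfun i) := by
  ext r s
  rw [Matrix.map_apply, rhoVec, Matrix.reindex_apply, Matrix.submatrix_apply, kron_apply,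
    kron_apply, kronPow_I2, _root_.map_mul, _root_.map_mul, red_kronPow_Bm, red_E, Nm_apply]
  rw [Matrix.one_apply, apply_ite red, _root_.map_one, _root_.map_zero]
  simp only [Fin.ext_iff, finCongr_symm, finCongr_apply, Fin.coe_divNat, Fin.coe_modNat,
    Fin.coe_cast]
  have hp : 0 < 2^(i.val/2) := Nat.pow_pos (by norm_num)
  -- components of mfun i
  have hb1 : mfun i % 2^(i.val/2) = 2^(i.val/2) - 1 ∧ (mfun i / 2^(i.val/2)) % 2 = i.val % 2 ∧
      mfun i / 2^(i.val/2) / 2 = 0 := by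
    rcases Nat.even_or_odd i.val with h | h
    · have he : i.val % 2 = 0 := Nat.even_iff.mp h
      have h2 : (i.val+1)/2 = i.val/2 := by omega
      have hm : mfun i = 2^(i.val/2) - 1 := by rw [mfun, h2]
      rw [hm, he]
      have hlt : 2^(i.val/2) - 1 < 2^(i.val/2) := by omega
      refine ⟨Nat.mod_eq_of_lt hlt, ?_, ?_⟩
      · simp [Nat.div_eq_of_lt hlt]
      · simp [Nat.div_eq_of_lt hlt]
    · have he : i.val % 2 = 1 := Nat.odd_iff.mp h
      have h2 : (i.val+1)/2 = i.val/2 + 1 := by omega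
      have hm : mfun i = 2*2^(i.val/2) - 1 := by rw [mfun, h2, pow_succ]; ring_nf
      have hdiv : mfun i / 2^(i.val/2) = 1 := by
        rw [hm, show 2*2^(i.val/2) - 1 = (2^(i.val/2) - 1) + 1*2^(i.val/2) by omega,
          Nat.add_mul_div_right _ _ hp, Nat.div_eq_of_lt (by omega)]
      rw [hdiv, he, hm]
      refine ⟨?_, rfl, rfl⟩
      rw [show 2*2^(i.val/2) - 1 = (2^(i.val/2) - 1) + 1 * 2^(i.val/2) by omega,
        Nat.add_mul_mod_self_right]
      exact Nat.mod_eq_of_lt (by omega)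
  obtain ⟨hm3, hm2, hm1⟩ := hb1
  -- xor decompositions
  have d3 : (r.val ^^^ s.val) % 2^(i.val/2) = r.val % 2^(i.val/2) ^^^ s.val % 2^(i.val/2) :=
    xor_mod_pow _ _ _
  have dq : (r.val ^^^ s.val) / 2^(i.val/2) = r.val / 2^(i.val/2) ^^^ s.val / 2^(i.val/2) :=
    xor_div_pow _ _ _
  have d2 : ((r.val ^^^ s.val) / 2^(i.val/2)) % 2
      = (r.val / 2^(i.val/2)) % 2 ^^^ (s.val / 2^(i.val/2)) % 2 := by
    rw [dq]; simpa using xor_mod_pow (r.val / 2^(i.val/2)) (s.val / 2^(i.val/2)) 1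
  have d1 : ((r.val ^^^ s.val) / 2^(i.val/2)) / 2
      = (r.val / 2^(i.val/2)) / 2 ^^^ (s.val / 2^(i.val/2)) / 2 := by
    rw [dq]; exact Nat.xor_div_two
  by_cases hc : r.val ^^^ s.val = mfun i
  · have c1 : r.val / 2^(i.val/2) / 2 = s.val / 2^(i.val/2) / 2 := by
      apply xor_eq_zero_iff.mp
      rw [← d1, hc, hm1]
    have c2 : (r.val / 2^(i.val/2)) % 2 ^^^ (s.val / 2^(i.val/2)) % 2 = i.val % 2 := by
      rw [← d2, hc, hm2]
    have c3 : r.val % 2^(i.val/2) ^^^ s.val % 2^(i.val/2) = 2^(i.val/2) - 1 := by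
      rw [← d3, hc, hm3]
    rw [if_pos hc, if_pos c1, if_pos c2, if_pos c3, one_mul, ← pow_succ']
  · rw [if_neg hc]
    by_cases c1 : r.val / 2^(i.val/2) / 2 = s.val / 2^(i.val/2) / 2
    · by_cases c2 : (r.val / 2^(i.val/2)) % 2 ^^^ (s.val / 2^(i.val/2)) % 2 = i.val % 2
      · by_cases c3 : r.val % 2^(i.val/2) ^^^ s.val % 2^(i.val/2) = 2^(i.val/2) - 1
        · exfalso
          apply hc
          apply nat_split _ _ (2^(i.val/2)) hp
          · apply nat_split _ _ 2 (by norm_num)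
            · rw [d1, hm1, xor_eq_zero_iff.mpr c1]
            · rw [d2, hm2, c2]
          · rw [d3, hm3, c3]
        · rw [if_neg c3, mul_zero]
      · rw [if_neg c2, mul_zero, zero_mul]
    · rw [if_neg c1, zero_mul, zero_mul]

theorem xor_rot {a b c : ℕ} : a ^^^ b = c ↔ b = a ^^^ c := by
  constructor
  · rintro rfl; rw [← Nat.xor_assoc, Nat.xor_self, Nat.zero_xor]
  · rintro rfl; rw [← Nat.xor_assoc, Nat.xor_self, Nat.zero_xor]

theorem Nm_one (k : ℕ) : Nm k 0 0 = 1 := by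
  ext r s
  rw [Nm_apply, Matrix.one_apply, pow_zero]
  by_cases h : r = s
  · rw [if_pos (by rw [h, Nat.xor_self]), if_pos h]
  · rw [if_neg (fun hh => h (Fin.ext (xor_eq_zero_iff.mp hh))), if_neg h]

theorem Nm_mul (k c c' m m' : ℕ) (hm : m < 2^k) (hm' : m' < 2^k) :
    Nm k c m * Nm k c' m' = Nm k (c+c') (m ^^^ m') := by
  ext r t
  rw [Matrix.mul_apply, Nm_apply]
  rw [Finset.sum_eq_single (⟨r.val ^^^ m, Nat.xor_lt_two_pow r.isLt hm⟩ : Fin (2^k))]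
  · rw [Nm_apply, Nm_apply]
    have e1 : r.val ^^^ (r.val ^^^ m) = m := by
      rw [← Nat.xor_assoc, Nat.xor_self, Nat.zero_xor]
    rw [if_pos e1]
    have e2 : ((r.val ^^^ m) ^^^ t.val = m') ↔ (r.val ^^^ t.val = m ^^^ m') := by
      rw [xor_rot, xor_rot (a := r.val), Nat.xor_assoc]
    by_cases h : r.val ^^^ t.val = m ^^^ m'
    · rw [if_pos (e2.mpr h), if_pos h, pow_add]
    · rw [if_neg (fun hh => h (e2.mp hh)), if_neg h, mul_zero]
  · intro b _ hb
    rw [Nm_apply]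
    have : ¬(r.val ^^^ b.val = m) := by
      intro hh
      apply hb
      ext
      exact (xor_rot.mp hh).symm.symm.symm ▸ (xor_rot.mp hh).symm
    rw [if_neg this, zero_mul]
  · intro h
    exact absurd (Finset.mem_univ _) h

def CL {n : ℕ} (l : List (Fin n)) : ℕ := (l.map (fun i => i.val/2 + 1)).sum

def ML {n : ℕ} (l : List (Fin n)) : ℕ := (l.map mfun).foldr (· ^^^ ·) 0

theorem mfun_lt (k : ℕ) (i : Fin (2*k)) : mfun i < 2^k := by
  have h1 : (i.val+1)/2 ≤ k := by omega
  have := Nat.pow_le_pow_right (show 0 < 2 by norm_num) h1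
  have h0 : 0 < 2^((i.val+1)/2) := Nat.pow_pos (by norm_num)
  rw [mfun]
  omega

theorem ML_lt (k : ℕ) (l : List (Fin (2*k))) : ML l < 2^k := by
  induction l with
  | nil => exact Nat.pow_pos (by norm_num)
  | cons i l ih => exact Nat.xor_lt_two_pow (mfun_lt k i) ih

theorem prod_red (k : ℕ) (l : List (Fin (2*k))) :
    ((l.map (rhoVec k)).prod).map red = Nm k (CL l) (ML l) := by
  induction l with
  | nil =>
    rw [List.map_nil, List.prod_nil, show CL ([] : List (Fin (2*k))) = 0 from rfl,
      show ML ([] : List (Fin (2*k))) = 0 from rfl, Nm_one]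
    exact Matrix.map_one red (map_zero red) (map_one red)
  | cons i l ih =>
    rw [List.map_cons, List.prod_cons, Matrix.map_mul, rhoVec_red, ih,
      Nm_mul _ _ _ _ _ (mfun_lt k i) (ML_lt k l)]
    rfl

theorem one_ne_zero_Rbar : (1 : Rbar) ≠ 0 := by
  intro h
  rw [show (1 : Rbar) = red 1 from rfl, show (0 : Rbar) = red 0 from rfl,
    red_eq_iff, two_dvd_iff] at h
  exact absurd h (by decide)

theorem red_gi_pow_ne_zero (c : ℕ) : red gi ^ c ≠ 0 := by
  rw [red_gi_pow]
  by_cases h : c % 2 = 0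
  · rw [if_pos h]; exact one_ne_zero_Rbar
  · rw [if_neg h]; exact red_gi_ne_zero

theorem Nm_inj {k c c' m m' : ℕ} (hm : m < 2^k) (hm' : m' < 2^k)
    (h : Nm k c m = Nm k c' m') : m = m' ∧ c % 2 = c' % 2 := by
  have h0 : (0 : ℕ) < 2^k := Nat.pow_pos (by norm_num)
  have h2 : Nm k c m ⟨m, hm⟩ ⟨0, h0⟩ = Nm k c' m' ⟨m, hm⟩ ⟨0, h0⟩ := by rw [h]
  rw [Nm_apply, Nm_apply] at h2
  have h3 : ((⟨m,hm⟩ : Fin (2^k)).val ^^^ (⟨0,h0⟩ : Fin (2^k)).val) = m := Nat.xor_zero m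
  rw [h3, if_pos rfl] at h2
  by_cases hmm : m = m'
  · rw [if_pos hmm] at h2
    exact ⟨hmm, red_gi_pow_inj h2⟩
  · rw [if_neg hmm] at h2
    exact absurd h2 (red_gi_pow_ne_zero c)

theorem Nm_congr {k c c' m : ℕ} (h : c % 2 = c' % 2) : Nm k c m = Nm k c' m := by
  ext r s
  rw [Nm_apply, Nm_apply, red_gi_pow, red_gi_pow, h]

theorem rhoBar_eq_Nm (k : ℕ) (μ : Finset (Fin (2*k))) :
    rhoBar k μ = Nm k (CL (μ.sort (· ≤ ·))) (ML (μ.sort (· ≤ ·))) := by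
  rw [rhoBar, rho, prod_red]

-- ===== encoding vectors over ZMod 2 =====

def wfun (k : ℕ) (i : Fin (2*k)) : Fin k → ZMod 2 := fun t => if 2*t.val < i.val then 1 else 0

def gfun (k : ℕ) (i : Fin (2*k)) : ZMod 2 × (Fin k → ZMod 2) :=
  (((i.val/2 + 1 : ℕ) : ZMod 2), wfun k i)

def enc {k : ℕ} (v : Fin k → ZMod 2) : ℕ := ∑ t : Fin k, (v t).val * 2^t.val

theorem zmod2_val_add (a b : ZMod 2) : (a + b).val = a.val ^^^ b.val := by
  revert a b
  decide

theorem xor_digit (a b x y : ℕ) (ha : a < 2) (hb : b < 2) :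
    (a + 2*x) ^^^ (b + 2*y) = (a ^^^ b) + 2*(x ^^^ y) := by
  have h1 : ((a + 2*x) ^^^ (b + 2*y)) % 2 = a ^^^ b := by
    have := xor_mod_pow (a + 2*x) (b + 2*y) 1
    rw [pow_one] at this
    rw [this, Nat.add_mul_mod_self_left, Nat.add_mul_mod_self_left,
      Nat.mod_eq_of_lt ha, Nat.mod_eq_of_lt hb]
  have h2 : ((a + 2*x) ^^^ (b + 2*y)) / 2 = x ^^^ y := by
    rw [Nat.xor_div_two]
    congr 1 <;> omega
  have h3 : a ^^^ b < 2 := by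
    have := Nat.xor_lt_two_pow (n := 1) (by omega : a < 2^1) (by omega : b < 2^1)
    omega
  omega

theorem enc_succ {k : ℕ} (v : Fin (k+1) → ZMod 2) :
    enc v = (v 0).val + 2 * enc (v ∘ Fin.succ) := by
  rw [enc, Fin.sum_univ_succ, enc, Finset.mul_sum]
  simp only [Fin.val_succ, Fin.val_zero, pow_zero, mul_one, Function.comp_apply]
  congr 1
  apply Finset.sum_congr rfl
  intro t _
  rw [pow_succ]
  ring

theorem enc_lt {k : ℕ} (v : Fin k → ZMod 2) : enc v < 2^k := by
  induction k with
  | zero => rw [enc]; simp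
  | succ k ih =>
    rw [enc_succ]
    have h1 := ih (v ∘ Fin.succ)
    have h2 : (v 0).val < 2 := ZMod.val_lt _
    have : 2^(k+1) = 2*2^k := by ring
    omega

theorem enc_xor {k : ℕ} (v u : Fin k → ZMod 2) : enc (v + u) = enc v ^^^ enc u := by
  induction k with
  | zero => rw [enc, enc, enc]; simp
  | succ k ih =>
    rw [enc_succ, enc_succ, enc_succ,
      xor_digit _ _ _ _ (ZMod.val_lt _) (ZMod.val_lt _)]
    have hc : (v + u) ∘ Fin.succ = v ∘ Fin.succ + u ∘ Fin.succ := rfl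
    rw [show (v + u) 0 = v 0 + u 0 from rfl, zmod2_val_add, hc, ih]

theorem enc_eq_zero {k : ℕ} (v : Fin k → ZMod 2) (h : enc v = 0) : v = 0 := by
  induction k with
  | zero => funext t; exact absurd t.isLt (by omega)
  | succ k ih =>
    rw [enc_succ] at h
    have h0 : (v 0).val = 0 := by omega
    have h1 : enc (v ∘ Fin.succ) = 0 := by omega
    have h2 := ih _ h1
    funext t
    refine Fin.cases ?_ ?_ t
    · exact (ZMod.val_eq_zero _).mp h0
    · intro j
      exact congrFun h2 j

theorem enc_inj {k : ℕ} {v u : Fin k → ZMod 2} (h : enc v = enc u) : v = u := by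
  have h1 : enc (v + u) = 0 := by rw [enc_xor, h, Nat.xor_self]
  have h2 := enc_eq_zero _ h1
  funext t
  have h3 := congrFun h2 t
  have h4 : v t + u t = 0 := h3
  have : v t = - u t := eq_neg_of_add_eq_zero_left h4
  rw [this, CharTwo.neg_eq]

theorem geom_two (n : ℕ) : ∑ t ∈ Finset.range n, 2^t = 2^n - 1 := by
  induction n with
  | zero => simp
  | succ n ih =>
    rw [Finset.sum_range_succ, ih]
    have : 0 < 2^n := Nat.pow_pos (by norm_num)
    have h2 : 2^(n+1) = 2*2^n := by ring
    omega

theorem ite_geom (k c : ℕ) (hc : c ≤ k) :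
    ∑ t ∈ Finset.range k, (if t < c then 2^t else 0) = 2^c - 1 := by
  rw [← geom_two, ← Finset.sum_filter]
  congr 1
  ext t
  simp only [Finset.mem_filter, Finset.mem_range]
  omega

theorem enc_wfun (k : ℕ) (i : Fin (2*k)) : enc (wfun k i) = mfun i := by
  have hc : (i.val+1)/2 ≤ k := by omega
  rw [enc, mfun, ← ite_geom k ((i.val+1)/2) hc, ← Fin.sum_univ_eq_sum_range]
  apply Finset.sum_congr rfl
  intro t _
  rw [wfun]
  by_cases h : 2*t.val < i.val
  · rw [if_pos h, if_pos (by omega), show (1 : ZMod 2).val = 1 by decide, one_mul]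
  · rw [if_neg h, if_neg (by omega), show (0 : ZMod 2).val = 0 by decide, zero_mul]

theorem ML_enc (k : ℕ) (l : List (Fin (2*k))) : ML l = enc (l.map (wfun k)).sum := by
  induction l with
  | nil =>
    rw [ML, List.map_nil, List.map_nil, List.sum_nil]
    rw [show (List.foldr (· ^^^ ·) 0 [] : ℕ) = 0 from rfl]
    rw [show enc (0 : Fin k → ZMod 2) = 0 from by rw [enc]; simp]
  | cons i l ih =>
    rw [ML, List.map_cons, List.foldr_cons, List.map_cons, List.sum_cons, enc_xor,
      enc_wfun, ← ih]
    rfl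

theorem sort_map_sum {M : Type*} [AddCommMonoid M] {n : ℕ} (μ : Finset (Fin n)) (f : Fin n → M) :
    ((μ.sort (· ≤ ·)).map f).sum = ∑ i ∈ μ, f i := by
  rw [List.Perm.sum_eq (List.Perm.map f (Finset.sort_perm_toList (r := (· ≤ ·)) μ))]
  rw [Finset.sum]
  rw [show Multiset.map f μ.val = ↑(μ.toList.map f) from ?_]
  · rw [Multiset.sum_coe]
  · rw [Finset.toList, ← Multiset.map_coe, Multiset.coe_toList]

def Phi (k : ℕ) (μ : Finset (Fin (2*k))) : ZMod 2 × (Fin k → ZMod 2) := ∑ i ∈ μ, gfun k i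

theorem Phi_fst (k : ℕ) (μ : Finset (Fin (2*k))) :
    (Phi k μ).1 = ((CL (μ.sort (· ≤ ·)) : ℕ) : ZMod 2) := by
  rw [Phi, CL, Prod.fst_sum, Nat.cast_list_sum, List.map_map, sort_map_sum]
  rfl

theorem Phi_snd (k : ℕ) (μ : Finset (Fin (2*k))) :
    enc (Phi k μ).2 = ML (μ.sort (· ≤ ·)) := by
  rw [Phi, Prod.snd_sum, ML_enc, sort_map_sum]
  rfl

theorem rhoBar_eq_iff (k : ℕ) (η μ : Finset (Fin (2*k))) :
    rhoBar k η = rhoBar k μ ↔ Phi k η = Phi k μ := by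
  rw [rhoBar_eq_Nm, rhoBar_eq_Nm]
  constructor
  · intro h
    obtain ⟨hm, hc⟩ := Nm_inj (ML_lt k _) (ML_lt k _) h
    refine Prod.ext_iff.mpr ⟨?_, ?_⟩
    · rw [Phi_fst, Phi_fst, ZMod.natCast_eq_natCast_iff']
      exact hc
    · apply enc_inj
      rw [Phi_snd, Phi_snd, hm]
  · intro h
    have h1 : (Phi k η).1 = (Phi k μ).1 := by rw [h]
    have h2 : (Phi k η).2 = (Phi k μ).2 := by rw [h]
    rw [Phi_fst, Phi_fst, ZMod.natCast_eq_natCast_iff'] at h1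
    have hm : ML (η.sort (· ≤ ·)) = ML (μ.sort (· ≤ ·)) := by
      rw [← Phi_snd, ← Phi_snd, h2]
    rw [hm]
    exact Nm_congr h1

-- ===== the linear map and counting =====

def Gmap (k : ℕ) : (Fin (2*k) → ZMod 2) →ₗ[ZMod 2] (ZMod 2 × (Fin k → ZMod 2)) where
  toFun x := ∑ i, x i • gfun k i
  map_add' x y := by
    simp only [Pi.add_apply, add_smul]
    rw [Finset.sum_add_distrib]
  map_smul' c x := by
    simp only [Pi.smul_apply, smul_eq_mul, RingHom.id_apply, Finset.smul_sum,
      mul_smul]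

def indFun {n : ℕ} (μ : Finset (Fin n)) : Fin n → ZMod 2 := fun i => if i ∈ μ then 1 else 0

theorem Gmap_ind (k : ℕ) (μ : Finset (Fin (2*k))) : Gmap k (indFun μ) = Phi k μ := by
  rw [Gmap, Phi]
  simp only [LinearMap.coe_mk, AddHom.coe_mk, indFun, ite_smul, one_smul, zero_smul]
  rw [Finset.sum_ite_mem, Finset.univ_inter]

theorem indFun_inj {n : ℕ} : Function.Injective (indFun (n := n)) := by
  intro μ η h
  ext i
  have h1 := congrFun h i
  rw [indFun, indFun] at h1
  by_cases hi : i ∈ μ <;> by_cases hi' : i ∈ η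
  · simp [hi, hi']
  · rw [if_pos hi, if_neg hi'] at h1
    exact absurd h1 one_ne_zero
  · rw [if_neg hi, if_pos hi'] at h1
    exact absurd h1.symm one_ne_zero
  · simp [hi, hi']

theorem indFun_surj {n : ℕ} : Function.Surjective (indFun (n := n)) := by
  intro x
  refine ⟨Finset.univ.filter (fun i => x i = 1), ?_⟩
  funext i
  rw [indFun]
  have h01 : ∀ a : ZMod 2, a = 0 ∨ a = 1 := by decide
  by_cases h : x i = 1
  · simp [h]
  · have h0 : x i = 0 := (h01 (x i)).resolve_right h
    simp [h, h0]

theorem Gmap_single (k : ℕ) (i : Fin (2*k)) : Gmap k (Pi.single i 1) = gfun k i := by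
  rw [Gmap]
  simp only [LinearMap.coe_mk, AddHom.coe_mk, Pi.single_apply, ite_smul, one_smul, zero_smul]
  rw [Finset.sum_ite_eq' Finset.univ i (gfun k), if_pos (Finset.mem_univ i)]

theorem gfun_mem_range (k : ℕ) (i : Fin (2*k)) : gfun k i ∈ LinearMap.range (Gmap k) :=
  ⟨Pi.single i 1, Gmap_single k i⟩

theorem Gmap_surj (k : ℕ) (hk : 1 ≤ k) : Function.Surjective (Gmap k) := by
  rw [← LinearMap.range_eq_top]
  rw [Submodule.eq_top_iff']
  rintro ⟨c, v⟩
  have key : ((c, v) : ZMod 2 × (Fin k → ZMod 2))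
      = c • gfun k ⟨0, by omega⟩
        + ∑ t : Fin k, v t • (gfun k ⟨2*t.val, by omega⟩ + gfun k ⟨2*t.val+1, by omega⟩) := by
    refine Prod.ext_iff.mpr ⟨?_, ?_⟩
    · rw [Prod.fst_add, Prod.fst_sum]
      have h1 : ∀ t : Fin k, (v t • (gfun k ⟨2*t.val, by omega⟩
          + gfun k ⟨2*t.val+1, by omega⟩)).1 = 0 := by
        intro t
        rw [Prod.smul_fst, Prod.fst_add, gfun, gfun]
        have e1 : (2*t.val)/2 = t.val := by omega
        have e2 : (2*t.val+1)/2 = t.val := by omega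
        simp only [e1, e2]
        rw [CharTwo.add_self_eq_zero, smul_zero]
      rw [Finset.sum_congr rfl (fun t _ => h1 t), Finset.sum_const_zero, add_zero,
        Prod.smul_fst, gfun]
      norm_num
    · rw [Prod.snd_add, Prod.snd_sum]
      funext s
      rw [Pi.add_apply, Prod.smul_snd, Pi.smul_apply]
      have hw0 : (gfun k ⟨0, by omega⟩).2 s = 0 := by
        rw [gfun]
        simp [wfun]
      rw [hw0, smul_zero, zero_add, Finset.sum_apply]
      have h2 : ∀ t : Fin k, (v t • ((gfun k ⟨2*t.val, by omega⟩
          + gfun k ⟨2*t.val+1, by omega⟩)).2) s = v t * (if s = t then 1 else 0) := by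
        intro t
        simp only [Pi.smul_apply, Prod.snd_add, Pi.add_apply, gfun, wfun, smul_eq_mul]
        congr 1
        by_cases h : s = t
        · subst h
          rw [if_neg (by omega), if_pos (by omega), if_pos rfl, zero_add]
        · have hne : s.val ≠ t.val := fun hh => h (Fin.ext hh)
          by_cases hlt : s.val < t.val
          · rw [if_pos (by omega), if_pos (by omega), if_neg h, CharTwo.add_self_eq_zero]
          · rw [if_neg (by omega), if_neg (by omega), if_neg h, add_zero]
      rw [Finset.sum_congr rfl (fun t _ => by exact h2 t)]
      simp only [mul_ite, mul_one, mul_zero]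
      rw [Finset.sum_ite_eq Finset.univ s v, if_pos (Finset.mem_univ s)]
  rw [key]
  exact add_mem (Submodule.smul_mem _ _ (gfun_mem_range k _))
    (Submodule.sum_mem _ (fun t _ => Submodule.smul_mem _ _
      (add_mem (gfun_mem_range k _) (gfun_mem_range k _))))

theorem card_ker (k : ℕ) (hk : 1 ≤ k) :
    Nat.card (LinearMap.ker (Gmap k)) = 2^(k-1) := by
  have : Fintype (LinearMap.ker (Gmap k)) := Fintype.ofFinite _
  have hrange : LinearMap.range (Gmap k) = ⊤ := LinearMap.range_eq_top.mpr (Gmap_surj k hk)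
  have hdom : Module.finrank (ZMod 2) (Fin (2*k) → ZMod 2) = 2*k := Module.finrank_fin_fun (ZMod 2)
  have hcod : Module.finrank (ZMod 2) (ZMod 2 × (Fin k → ZMod 2)) = 1 + k := by
    rw [Module.finrank_prod, Module.finrank_self, Module.finrank_fin_fun (ZMod 2)]
  have hrn := LinearMap.finrank_range_add_finrank_ker (Gmap k)
  rw [hrange, finrank_top, hdom, hcod] at hrn
  have hker : Module.finrank (ZMod 2) (LinearMap.ker (Gmap k)) = k - 1 := by omega
  have hcard := Module.card_eq_pow_finrank (K := ZMod 2) (V := LinearMap.ker (Gmap k))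
  rw [Nat.card_eq_fintype_card, hcard, hker, ZMod.card]

theorem addself_fun {n : ℕ} (v : Fin n → ZMod 2) : v + v = 0 := by
  funext i
  exact CharTwo.add_self_eq_zero _

theorem addself_pair {k : ℕ} (v : ZMod 2 × (Fin k → ZMod 2)) : v + v = 0 :=
  Prod.ext_iff.mpr ⟨CharTwo.add_self_eq_zero _, addself_fun _⟩

/-- Each equivalence class of generators acting identically on the 2-torsion points contains
exactly `2^{k−1}` of the `2^{2k}` generators. -/
theorem card_equiv_class (k : ℕ) (hk : 1 ≤ k) (μ : Finset (Fin (2 * k))) :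
    Set.ncard {η : Finset (Fin (2 * k)) | rhoBar k η = rhoBar k μ} = 2 ^ (k - 1) := by
  have hset : {η : Finset (Fin (2 * k)) | rhoBar k η = rhoBar k μ}
      = indFun ⁻¹' {x | Gmap k x = Gmap k (indFun μ)} := by
    ext η
    simp only [Set.mem_setOf_eq, Set.mem_preimage, Gmap_ind]
    exact rhoBar_eq_iff k η μ
  have hT : {x | Gmap k x = Gmap k (indFun μ)}
      = (fun y => y + indFun μ) '' ((LinearMap.ker (Gmap k) : Set (Fin (2*k) → ZMod 2))) := by
    ext x
    simp only [Set.mem_image, SetLike.mem_coe, LinearMap.mem_ker, Set.mem_setOf_eq]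
    constructor
    · intro h
      refine ⟨x + indFun μ, by rw [map_add, h, addself_pair], ?_⟩
      rw [add_assoc, addself_fun, add_zero]
    · rintro ⟨y, hy, rfl⟩
      rw [map_add, hy, zero_add]
  rw [hset, ← Set.ncard_image_of_injective _ indFun_inj,
    Set.image_preimage_eq _ indFun_surj, hT,
    Set.ncard_image_of_injective _ (add_left_injective (indFun μ)),
    ← Nat.card_coe_set_eq]
  rw [show Nat.card ((LinearMap.ker (Gmap k) : Set (Fin (2*k) → ZMod 2)))
      = Nat.card (LinearMap.ker (Gmap k)) from rfl]
  exact card_ker k hk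

end DiracSpinor
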